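/- If X is a normal T1 (i.e. T4) topological space, then the Vietoris hyperspace of closed subsets of X is regular. -/

import Mathlib

open TopologicalSpace Set

/-- The Vietoris topology on the hyperspace of closed subsets, generated by the sets
`□U = {a | ↑a ⊆ U}` and `◇U = {a | (↑a ∩ U).Nonempty}` for `U` open. -/
instance vietoris (X : Type*) [TopologicalSpace X] : TopologicalSpace (Closeds X) :=
  generateFrom
    ({s | ∃ U : Set X, IsOpen U ∧ s = {a : Closeds X | (a : Set X) ⊆ U}} ∪
     {s | ∃ U : Set X, IsOpen U ∧ s = {a : Closeds X | ((a : Set X) ∩ U).Nonempty}})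

/-!
Regularity may be checked on the subbasis. A point `a ∈ □U` has the closed neighbourhood
`□(closure W)` inside `□U`, where normality gives an open `W` with
`a ⊆ W ⊆ closure W ⊆ U`; a point `a ∈ ◇U` meets `U` at some `x`, and regularity of `X` gives
a closed neighbourhood `K ⊆ U` of `x`, so that `◇K` is a closed neighbourhood of `a` in `◇U`.
-/

open Filter Topology

lemma disjoint_nhdsSet_compl_nhds_of_isClosed_subset {α : Type*} [TopologicalSpace α]
    {a : α} {c t : Set α} (hc : c ∈ 𝓝 a) (hc_closed : IsClosed c) (hct : c ⊆ t) :
    Disjoint (𝓝ˢ tᶜ) (𝓝 a) :=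
  disjoint_of_disjoint_of_mem disjoint_compl_left
    (hc_closed.isOpen_compl.mem_nhdsSet.2 (compl_subset_compl.2 hct)) hc

namespace TopologicalSpace.Closeds

variable {X : Type*} [TopologicalSpace X]

lemma isOpen_setOf_subset {U : Set X} (hU : IsOpen U) :
    IsOpen {a : Closeds X | (a : Set X) ⊆ U} :=
  isOpen_generateFrom_of_mem (Or.inl ⟨U, hU, rfl⟩)

lemma isOpen_setOf_inter_nonempty {U : Set X} (hU : IsOpen U) :
    IsOpen {a : Closeds X | ((a : Set X) ∩ U).Nonempty} :=
  isOpen_generateFrom_of_mem (Or.inr ⟨U, hU, rfl⟩)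

lemma isClosed_setOf_subset {K : Set X} (hK : IsClosed K) :
    IsClosed {a : Closeds X | (a : Set X) ⊆ K} := by
  simp_rw [← isOpen_compl_iff, compl_ofPred, not_subset_iff_exists_mem_notMem]
  exact isOpen_setOf_inter_nonempty hK.isOpen_compl

lemma isClosed_setOf_inter_nonempty {K : Set X} (hK : IsClosed K) :
    IsClosed {a : Closeds X | ((a : Set X) ∩ K).Nonempty} := by
  simp_rw [← isOpen_compl_iff, compl_ofPred, not_nonempty_iff_eq_empty,
    ← disjoint_iff_inter_eq_empty, ← subset_compl_iff_disjoint_right]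
  exact isOpen_setOf_subset hK.isOpen_compl

lemma exists_isClosed_mem_nhds_subset_setOf_subset [NormalSpace X] {U : Set X} (hU : IsOpen U)
    {a : Closeds X} (ha : (a : Set X) ⊆ U) :
    ∃ c ∈ 𝓝 a, IsClosed c ∧ c ⊆ {b : Closeds X | (b : Set X) ⊆ U} := by
  obtain ⟨W, hW, haW, hWU⟩ := normal_exists_closure_subset a.isClosed hU ha
  refine ⟨{b | (b : Set X) ⊆ closure W}, ?_, isClosed_setOf_subset isClosed_closure,
    fun b hb => hb.trans hWU⟩
  exact mem_of_superset ((isOpen_setOf_subset hW).mem_nhds haW) fun b hb =>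
    hb.trans subset_closure

lemma exists_isClosed_mem_nhds_subset_setOf_inter_nonempty [RegularSpace X] {U : Set X}
    (hU : IsOpen U) {a : Closeds X} (ha : ((a : Set X) ∩ U).Nonempty) :
    ∃ c ∈ 𝓝 a, IsClosed c ∧ c ⊆ {b : Closeds X | ((b : Set X) ∩ U).Nonempty} := by
  obtain ⟨x, hxa, hxU⟩ := ha
  obtain ⟨K, hK, hK_closed, hKU⟩ := exists_mem_nhds_isClosed_subset (hU.mem_nhds hxU)
  refine ⟨{b | ((b : Set X) ∩ K).Nonempty}, ?_, isClosed_setOf_inter_nonempty hK_closed,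
    fun b => Nonempty.mono (inter_subset_inter_right _ hKU)⟩
  have hxK : x ∈ interior K := mem_interior_iff_mem_nhds.2 hK
  exact mem_of_superset ((isOpen_setOf_inter_nonempty isOpen_interior).mem_nhds ⟨x, hxa, hxK⟩)
    fun b => Nonempty.mono (inter_subset_inter_right _ interior_subset)

end TopologicalSpace.Closeds

theorem closeds_regular_of_t4 {X : Type*} [TopologicalSpace X] [T1Space X] [NormalSpace X] :
    RegularSpace (Closeds X) := by
  rw [regularSpace_generateFrom rfl]
  rintro t (⟨U, hU, rfl⟩ | ⟨U, hU, rfl⟩) a ha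
  · obtain ⟨c, hc, hc_closed, hct⟩ := Closeds.exists_isClosed_mem_nhds_subset_setOf_subset hU ha
    exact disjoint_nhdsSet_compl_nhds_of_isClosed_subset hc hc_closed hct
  · obtain ⟨c, hc, hc_closed, hct⟩ :=
      Closeds.exists_isClosed_mem_nhds_subset_setOf_inter_nonempty hU ha
    exact disjoint_nhdsSet_compl_nhds_of_isClosed_subset hc hc_closed hct
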